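/- Let α_1 ≥ α_2 ≥ … ≥ α_n ≥ 0 and let K = conv{0, α_1 e_1, …, α_n e_n} ⊆ ℝ^n. Then Δ_n + K = (e_n + K) ∪ (Δ_n + P K), where P denotes the orthogonal projection onto span{e_1,…,e_{n−1}} (so P K = conv{0, α_1 e_1, …, α_{n−1} e_{n−1}}), and the two sets e_n + K and Δ_n + P K have intersection of n-dimensional Lebesgue measure zero. -/

import Mathlib

open MeasureTheory
open scoped Pointwise

noncomputable section

/-- The nonnegative orthant `ℝ₊ⁿ`. -/
def nonnegOrthant (n : ℕ) : Set (EuclideanSpace ℝ (Fin n)) := {x | ∀ i, 0 ≤ x i}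

/-- The sign `±1` associated to a boolean. -/
def sgn (b : Bool) : ℝ := if b then 1 else -1

/-- The closed orthant `σ ℝ₊ⁿ` corresponding to a sign vector `σ ∈ {-1,1}ⁿ`. -/
def signedOrthant {n : ℕ} (σ : Fin n → Bool) : Set (EuclideanSpace ℝ (Fin n)) :=
  {x | ∀ i, 0 ≤ sgn (σ i) * x i}

/-- Coordinatewise reflection `σ S = {(σ₁x₁, …, σₙxₙ) : x ∈ S}`. -/
def sigmaAct {n : ℕ} (σ : Fin n → Bool) (S : Set (EuclideanSpace ℝ (Fin n))) :
    Set (EuclideanSpace ℝ (Fin n)) :=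
  (fun x => (WithLp.toLp 2 (fun i => sgn (σ i) * x i) : EuclideanSpace ℝ (Fin n))) '' S

/-- Orthogonal projection onto the coordinate subspace `span {eᵢ : i ∈ I}`. -/
def coordProj {n : ℕ} (I : Finset (Fin n)) (x : EuclideanSpace ℝ (Fin n)) :
    EuclideanSpace ℝ (Fin n) :=
  (WithLp.toLp 2 (fun i => if i ∈ I then x i else 0) : EuclideanSpace ℝ (Fin n))

/-- The coordinate subspace `span {eᵢ : i ∈ I}`, as a set. -/
def coordSubspace {n : ℕ} (I : Finset (Fin n)) : Set (EuclideanSpace ℝ (Fin n)) :=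
  {x | ∀ i ∉ I, x i = 0}

/-- A set `K ⊆ ℝ₊ⁿ` is anti-blocking if for every coordinate subspace `E` the orthogonal
projection `P_E K` equals the section `K ∩ E`. -/
def IsAntiBlocking {n : ℕ} (K : Set (EuclideanSpace ℝ (Fin n))) : Prop :=
  K ⊆ nonnegOrthant n ∧ ∀ I : Finset (Fin n), coordProj I '' K = K ∩ coordSubspace I

/-- `K` is locally anti-blocking if `(σK) ∩ ℝ₊ⁿ` is anti-blocking for every sign vector `σ`. -/
def IsLocallyAntiBlocking {n : ℕ} (K : Set (EuclideanSpace ℝ (Fin n))) : Prop :=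
  ∀ σ : Fin n → Bool, IsAntiBlocking (sigmaAct σ K ∩ nonnegOrthant n)

/-- The coordinate simplex `conv{0, e₁, …}` in the Euclidean space with coordinates `ι`. -/
def coordSimplex (ι : Type*) [Fintype ι] [DecidableEq ι] : Set (EuclideanSpace ℝ ι) :=
  convexHull ℝ (insert 0 (Set.range fun i : ι => EuclideanSpace.single i (1 : ℝ)))

/-- Restriction to the coordinates in `I`, realizing the orthogonal projection onto
`span {eᵢ : i ∈ I}` as a map onto a `#I`-dimensional Euclidean space (so that volumes of
images compute lower-dimensional Lebesgue measures of coordinate projections). -/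
def restrictCoords {n : ℕ} (I : Finset (Fin n)) (x : EuclideanSpace ℝ (Fin n)) :
    EuclideanSpace ℝ ↥I :=
  (WithLp.toLp 2 (fun i : ↥I => x i) : EuclideanSpace ℝ ↥I)

/-!
Write `z = x + y` with `x ∈ Δₙ`, `y ∈ K`, and let `m` be the last coordinate, where `α` is
smallest. When all `αᵢ > 0`, `K = {y ≥ 0 | ∑ yᵢ / αᵢ ≤ 1}`, so mass in coordinate `i`
costs `1 / αᵢ ≤ 1 / αₘ` of the budget. If `xₘ + yₘ ≥ 1`, then `z - eₘ ∈ K`: it adds `x - eₘ`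
to `y` (coordinate `m` stays nonnegative), at cost `∑ xᵢ / αᵢ - 1 / αₘ ≤ (∑ xᵢ - 1) / αₘ ≤ 0`.
If `xₘ + yₘ ≤ 1`, move `yₘ` from `y` to `x`, and a share `t xᵢ` of every other coordinate of
`x` into `y`, with `t` chosen so that `x` stays in `Δₙ` and `t (∑ xᵢ - xₘ) ≤ yₘ`; the latter
makes the move no more expensive than the `yₘ / αₘ` it frees. When `αₘ = 0`, `K` lies in
`{zₘ = 0}` and `PK = K`. The two pieces meet only in the hyperplane `zₘ = 1`.
-/

open Set

section
variable {ι : Type*} [Fintype ι] [DecidableEq ι] {α : ι → ℝ}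

def scaledCoordSimplex (α : ι → ℝ) : Set (EuclideanSpace ℝ ι) :=
  convexHull ℝ (insert 0 (range fun i => α i • EuclideanSpace.single i (1 : ℝ)))

theorem mem_coordSimplex_iff {x : EuclideanSpace ℝ ι} :
    x ∈ coordSimplex ι ↔ (∀ i, 0 ≤ x i) ∧ ∑ i, x i ≤ 1 := by
  constructor
  · refine fun hx => convexHull_min
      (t := {y : EuclideanSpace ℝ ι | (∀ i, 0 ≤ y i) ∧ ∑ i, y i ≤ 1}) ?_ ?_ hx
    · rintro _ (rfl | ⟨j, rfl⟩)
      · simp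
      · simp [PiLp.single_apply, apply_ite]
    · rintro y ⟨hy0, hy1⟩ z ⟨hz0, hz1⟩ a b ha hb hab
      refine ⟨fun i => ?_, ?_⟩
      · simp only [PiLp.add_apply, PiLp.smul_apply, smul_eq_mul]
        have := hy0 i
        have := hz0 i
        positivity
      · simp only [PiLp.add_apply, PiLp.smul_apply, smul_eq_mul, Finset.sum_add_distrib,
          ← Finset.mul_sum]
        nlinarith
  · rintro ⟨hx0, hx1⟩
    rw [coordSimplex]
    -- `x = (1 - ∑ xᵢ) • 0 + ∑ xᵢ • eᵢ`, a convex combination indexed by `Option ι`.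
    have hmem := (convex_convexHull ℝ (insert 0 (range fun i : ι =>
        EuclideanSpace.single i (1 : ℝ)))).sum_mem (t := Finset.univ)
      (w := fun j : Option ι => j.elim (1 - ∑ i, x i) x)
      (z := fun j => j.elim 0 fun i => EuclideanSpace.single i 1)
      (fun j _ => by cases j <;> simp [hx1, hx0])
      (by simp [Fintype.sum_option])
      (fun j _ => by
        cases j
        · exact subset_convexHull ℝ _ (mem_insert _ _)
        · exact subset_convexHull ℝ _ (mem_insert_of_mem _ ⟨_, rfl⟩))
    convert hmem using 1
    ext i
    simp [Fintype.sum_option, Pi.single_apply]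

theorem single_mem_coordSimplex (i : ι) : EuclideanSpace.single i 1 ∈ coordSimplex ι :=
  subset_convexHull ℝ _ (mem_insert_of_mem _ ⟨i, rfl⟩)

theorem apply_le_one_of_mem_coordSimplex {x : EuclideanSpace ℝ ι} (hx : x ∈ coordSimplex ι)
    (i : ι) : x i ≤ 1 := by
  rw [mem_coordSimplex_iff] at hx
  exact (Finset.single_le_sum (fun j _ => hx.1 j) (Finset.mem_univ i)).trans hx.2

theorem mem_scaledCoordSimplex_iff {y : EuclideanSpace ℝ ι} :
    y ∈ scaledCoordSimplex α ↔ ∃ c ∈ coordSimplex ι, ∀ i, y i = α i * c i := by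
  have hlin : IsLinearMap ℝ fun c : EuclideanSpace ℝ ι => WithLp.toLp 2 fun i => α i * c i :=
    ⟨fun c d => by ext i; simp [mul_add], fun r c => by ext i; simp [mul_left_comm]⟩
  have himage : scaledCoordSimplex α =
      (fun c : EuclideanSpace ℝ ι => WithLp.toLp 2 fun i => α i * c i) '' coordSimplex ι := by
    rw [scaledCoordSimplex, coordSimplex, hlin.image_convexHull, image_insert_eq, ← range_comp]
    congr 3
    · ext i; simp
    · ext j i; by_cases h : i = j <;> simp [h]
  rw [himage]
  constructor
  · rintro ⟨c, hc, rfl⟩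
    exact ⟨c, hc, fun i => rfl⟩
  · rintro ⟨c, hc, hy⟩
    exact ⟨c, hc, by ext i; simp [hy]⟩

theorem apply_nonneg_of_mem_scaledCoordSimplex (hα : ∀ i, 0 ≤ α i) {y : EuclideanSpace ℝ ι}
    (hy : y ∈ scaledCoordSimplex α) (i : ι) : 0 ≤ y i := by
  obtain ⟨c, hc, hyc⟩ := mem_scaledCoordSimplex_iff.1 hy
  rw [hyc]
  exact mul_nonneg (hα i) ((mem_coordSimplex_iff.1 hc).1 i)

theorem apply_eq_zero_of_mem_scaledCoordSimplex {i : ι} (hαi : α i = 0) {y : EuclideanSpace ℝ ι}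
    (hy : y ∈ scaledCoordSimplex α) : y i = 0 := by
  obtain ⟨c, -, hyc⟩ := mem_scaledCoordSimplex_iff.1 hy
  rw [hyc, hαi, zero_mul]

theorem mem_scaledCoordSimplex_iff_of_pos (hα : ∀ i, 0 < α i) {y : EuclideanSpace ℝ ι} :
    y ∈ scaledCoordSimplex α ↔ (∀ i, 0 ≤ y i) ∧ ∑ i, y i / α i ≤ 1 := by
  have hc : ∀ c : EuclideanSpace ℝ ι,
      (∀ i, y i = α i * c i) ↔ c = WithLp.toLp 2 fun i => y i / α i := by
    refine fun c => ⟨fun h => ?_, fun h i => ?_⟩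
    · ext i; simp [h, (hα i).ne']
    · simp [h, mul_div_cancel₀ _ (hα i).ne']
  simp only [mem_scaledCoordSimplex_iff, hc, exists_eq_right, mem_coordSimplex_iff,
    le_div_iff₀ (hα _), zero_mul]

end

theorem sum_div_le_sum_div_of_forall_le {ι : Type*} [Fintype ι] {α u : ι → ℝ}
    (hα : ∀ i, 0 < α i) {m : ι} (hm : ∀ i, α m ≤ α i) (hu : ∀ i, 0 ≤ u i) :
    ∑ i, u i / α i ≤ (∑ i, u i) / α m := by
  rw [Finset.sum_div]
  exact Finset.sum_le_sum fun i _ => div_le_div_of_nonneg_left (hu i) (hα m) (hm i)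

theorem exists_mem_Icc_mul_le_of_le_add {S a b : ℝ} (hS : 0 ≤ S) (ha : 0 ≤ a) (hb : 0 ≤ b)
    (hab : S ≤ a + b) : ∃ t ∈ Icc (0 : ℝ) 1, (1 - t) * S ≤ a ∧ t * S ≤ b := by
  rcases hS.eq_or_lt with rfl | hS
  · exact ⟨0, by simp, by simpa, by simpa⟩
  refine ⟨min 1 (b / S), ⟨by positivity, min_le_left _ _⟩, ?_, ?_⟩
  · rcases le_total 1 (b / S) with h | h
    · simpa [min_eq_left h] using ha
    · rw [min_eq_right h, sub_mul, div_mul_cancel₀ _ hS.ne']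
      linarith
  · calc min 1 (b / S) * S ≤ b / S * S := by gcongr; exact min_le_right _ _
      _ = b := div_mul_cancel₀ _ hS.ne'

theorem volume_setOf_apply_eq {ι : Type*} [Fintype ι] (m : ι) (a : ℝ) :
    volume {z : EuclideanSpace ℝ ι | z m = a} = 0 := by
  have hs : MeasurableSet {f : ι → ℝ | f m = a} :=
    measurableSet_eq_fun (measurable_pi_apply m) measurable_const
  calc volume {z : EuclideanSpace ℝ ι | z m = a} = volume {f : ι → ℝ | f m = a} :=
        (PiLp.volume_preserving_ofLp ι).measure_preimage hs.nullMeasurableSet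
    _ = 0 := by rw [volume_pi]; exact Measure.pi_hyperplane (α := fun _ => ℝ) _ m a

section
variable {n : ℕ} {α : Fin n → ℝ} {m : Fin n}

theorem coordProj_apply (I : Finset (Fin n)) (x : EuclideanSpace ℝ (Fin n)) (i : Fin n) :
    coordProj I x i = if i ∈ I then x i else 0 :=
  rfl

theorem coordProj_apply_nonneg (I : Finset (Fin n)) {x : EuclideanSpace ℝ (Fin n)}
    (hx : ∀ i, 0 ≤ x i) (i : Fin n) : 0 ≤ coordProj I x i := by
  rw [coordProj_apply]
  split_ifs
  exacts [hx i, le_rfl]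

theorem coordProj_erase_add_smul_single (m : Fin n) (x : EuclideanSpace ℝ (Fin n)) :
    coordProj (Finset.univ.erase m) x + x m • EuclideanSpace.single m 1 = x := by
  ext i
  by_cases hi : i = m
  · subst hi; simp [coordProj_apply]
  · simp [coordProj_apply, hi]

theorem coordProj_erase_of_apply_eq_zero {x : EuclideanSpace ℝ (Fin n)} (hx : x m = 0) :
    coordProj (Finset.univ.erase m) x = x := by
  simpa [hx] using coordProj_erase_add_smul_single m x

theorem sum_coordProj_erase (m : Fin n) (x : EuclideanSpace ℝ (Fin n)) :
    ∑ i, coordProj (Finset.univ.erase m) x i = ∑ i, x i - x m := by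
  simp only [coordProj_apply, Finset.sum_ite_mem, Finset.univ_inter,
    Finset.sum_erase_eq_sub (Finset.mem_univ m)]

theorem coordProj_mem_coordSimplex (I : Finset (Fin n)) {x : EuclideanSpace ℝ (Fin n)}
    (hx : x ∈ coordSimplex (Fin n)) : coordProj I x ∈ coordSimplex (Fin n) := by
  rw [mem_coordSimplex_iff] at hx ⊢
  refine ⟨coordProj_apply_nonneg I hx.1, ?_⟩
  simp only [coordProj_apply, Finset.sum_ite_mem, Finset.univ_inter]
  exact (Finset.sum_le_sum_of_subset_of_nonneg (Finset.subset_univ I)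
    fun i _ _ => hx.1 i).trans hx.2

theorem coordProj_image_scaledCoordSimplex_subset (α : Fin n → ℝ) (I : Finset (Fin n)) :
    coordProj I '' scaledCoordSimplex α ⊆ scaledCoordSimplex α := by
  rintro _ ⟨y, hy, rfl⟩
  obtain ⟨c, hc, hyc⟩ := mem_scaledCoordSimplex_iff.1 hy
  refine mem_scaledCoordSimplex_iff.2 ⟨coordProj I c, coordProj_mem_coordSimplex I hc, fun i => ?_⟩
  simp only [coordProj_apply, hyc]
  split_ifs <;> simp

theorem add_sub_single_mem_scaledCoordSimplex (hα : ∀ i, 0 < α i) (hm : ∀ i, α m ≤ α i)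
    {x y : EuclideanSpace ℝ (Fin n)} (hx : x ∈ coordSimplex (Fin n))
    (hy : y ∈ scaledCoordSimplex α) (h : 1 ≤ x m + y m) :
    x + y - EuclideanSpace.single m 1 ∈ scaledCoordSimplex α := by
  rw [mem_coordSimplex_iff] at hx
  rw [mem_scaledCoordSimplex_iff_of_pos hα] at hy ⊢
  refine ⟨fun i => ?_, ?_⟩
  · by_cases hi : i = m
    · subst hi; simpa using h
    · simpa [hi] using add_nonneg (hx.1 i) (hy.1 i)
  · have hsplit : ∑ i, (x + y - EuclideanSpace.single m 1 : EuclideanSpace ℝ (Fin n)) i / α i =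
        ∑ i, y i / α i + (∑ i, x i / α i - 1 / α m) := by
      simp only [PiLp.sub_apply, PiLp.add_apply, PiLp.single_apply, sub_div, add_div, ite_div,
        zero_div, Finset.sum_sub_distrib, Finset.sum_add_distrib, Finset.sum_ite_eq',
        Finset.mem_univ, if_true]
      ring
    have hx_div : ∑ i, x i / α i ≤ 1 / α m :=
      (sum_div_le_sum_div_of_forall_le hα hm hx.1).trans
        (div_le_div_of_nonneg_right hx.2 (hα m).le)
    linarith [hy.2]

theorem add_mem_coordSimplex_add_coordProj_image (hα : ∀ i, 0 < α i) (hm : ∀ i, α m ≤ α i)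
    {x y : EuclideanSpace ℝ (Fin n)} (hx : x ∈ coordSimplex (Fin n))
    (hy : y ∈ scaledCoordSimplex α) (h : x m + y m ≤ 1) :
    x + y ∈ coordSimplex (Fin n) + coordProj (Finset.univ.erase m) '' scaledCoordSimplex α := by
  set P := coordProj (Finset.univ.erase m)
  set e : EuclideanSpace ℝ (Fin n) := EuclideanSpace.single m 1
  rw [mem_coordSimplex_iff] at hx
  rw [mem_scaledCoordSimplex_iff_of_pos hα] at hy
  have hPx : ∀ i, 0 ≤ P x i := coordProj_apply_nonneg _ hx.1
  have hPy : ∀ i, 0 ≤ P y i := coordProj_apply_nonneg _ hy.1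
  obtain ⟨t, ⟨ht0, ht1⟩, hx_room, hy_room⟩ :=
    exists_mem_Icc_mul_le_of_le_add (S := ∑ i, x i - x m) (a := 1 - x m - y m) (b := y m)
      (sum_coordProj_erase m x ▸ Finset.sum_nonneg fun i _ => hPx i)
      (by linarith) (hy.1 m) (by linarith)
  refine Set.mem_add.2 ⟨(1 - t) • P x + (x m + y m) • e, ?_,
    P y + t • P x, ⟨P y + t • P x, ?_, coordProj_erase_of_apply_eq_zero ?_⟩, ?_⟩
  · rw [mem_coordSimplex_iff]
    refine ⟨fun i => ?_, ?_⟩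
    · by_cases hi : i = m
      · subst hi; simpa [P, e, coordProj_apply] using add_nonneg (hx.1 i) (hy.1 i)
      · simpa [e, hi] using mul_nonneg (sub_nonneg.2 ht1) (hPx i)
    · have hsum : ∑ i, ((1 - t) • P x + (x m + y m) • e : EuclideanSpace ℝ (Fin n)) i =
          (1 - t) * ∑ i, P x i + (x m + y m) := by
        simp [e, Finset.sum_add_distrib, Finset.mul_sum]
      rw [hsum, sum_coordProj_erase]
      linarith
  · rw [mem_scaledCoordSimplex_iff_of_pos hα]
    refine ⟨fun i => add_nonneg (hPy i) (mul_nonneg ht0 (hPx i)), ?_⟩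
    have hsum : ∑ i, (P y + t • P x) i / α i =
        (∑ i, y i / α i - y m / α m) + t * ∑ i, P x i / α i := by
      simp only [PiLp.add_apply, PiLp.smul_apply, smul_eq_mul, add_div, Finset.sum_add_distrib,
        mul_div_assoc, ← Finset.mul_sum]
      congr 1
      simp only [P, coordProj_apply, ite_div, zero_div, Finset.sum_ite_mem, Finset.univ_inter,
        Finset.sum_erase_eq_sub (Finset.mem_univ m)]
    have hPx_div : ∑ i, P x i / α i ≤ (∑ i, x i - x m) / α m :=
      sum_coordProj_erase m x ▸ sum_div_le_sum_div_of_forall_le hα hm hPx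
    have ht_div : t * ((∑ i, x i - x m) / α m) ≤ y m / α m := by
      rw [← mul_div_assoc]
      exact div_le_div_of_nonneg_right hy_room (hα m).le
    rw [hsum]
    nlinarith [mul_le_mul_of_nonneg_left hPx_div ht0, hy.2]
  · simp [P, coordProj_apply]
  · calc (1 - t) • P x + (x m + y m) • e + (P y + t • P x)
        = (P x + x m • e) + (P y + y m • e) := by module
      _ = x + y := by rw [coordProj_erase_add_smul_single, coordProj_erase_add_smul_single]

theorem coordSimplex_add_scaledCoordSimplex_eq_union (hα : ∀ i, 0 ≤ α i) (hm : ∀ i, α m ≤ α i) :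
    coordSimplex (Fin n) + scaledCoordSimplex α =
      ({EuclideanSpace.single m 1} + scaledCoordSimplex α) ∪
        (coordSimplex (Fin n) + coordProj (Finset.univ.erase m) '' scaledCoordSimplex α) := by
  refine Subset.antisymm ?_ (union_subset ?_ ?_)
  · rintro _ ⟨x, hx, y, hy, rfl⟩
    rcases (hα m).eq_or_lt with hαm | hαm
    · exact Or.inr ⟨x, hx, y, ⟨y, hy, coordProj_erase_of_apply_eq_zero
        (apply_eq_zero_of_mem_scaledCoordSimplex hαm.symm hy)⟩, rfl⟩
    have hpos : ∀ i, 0 < α i := fun i => hαm.trans_le (hm i)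
    rcases le_total 1 (x m + y m) with h | h
    · exact Or.inl ⟨_, rfl, _, add_sub_single_mem_scaledCoordSimplex hpos hm hx hy h,
        add_sub_cancel _ _⟩
    · exact Or.inr (add_mem_coordSimplex_add_coordProj_image hpos hm hx hy h)
  · exact add_subset_add_right (singleton_subset_iff.2 (single_mem_coordSimplex m))
  · exact add_subset_add_left (coordProj_image_scaledCoordSimplex_subset α _)

theorem volume_singleton_add_inter_coordSimplex_add_eq_zero (hα : ∀ i, 0 ≤ α i) (m : Fin n) :
    volume (({EuclideanSpace.single m 1} + scaledCoordSimplex α) ∩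
      (coordSimplex (Fin n) + coordProj (Finset.univ.erase m) '' scaledCoordSimplex α)) = 0 := by
  refine measure_mono_null ?_ (volume_setOf_apply_eq m 1)
  rintro _ ⟨⟨_, rfl, y, hy, rfl⟩, ⟨x, hx, _, ⟨w, -, rfl⟩, hxw⟩⟩
  have hxm : x m = 1 + y m := by
    simpa [coordProj_apply] using congrArg (fun z : EuclideanSpace ℝ (Fin n) => z m) hxw
  rw [mem_ofPred_eq, PiLp.add_apply, PiLp.single_eq_same]
  linarith [apply_le_one_of_mem_coordSimplex hx m, apply_nonneg_of_mem_scaledCoordSimplex hα hy m]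

end

/-- **Decomposition `Δₙ + K = (eₙ + K) ∪ (Δₙ + PK)` (equation (4.2)).**
For `α₁ ≥ … ≥ αₙ ≥ 0` and `K = conv{0, α₁e₁, …, αₙeₙ}`, the sum `Δₙ + K` splits as the union
of the translate `eₙ + K` and `Δₙ + PK` (`P` the projection onto `span{e₁,…,e_{n-1}}`),
the two pieces intersecting in measure zero. -/
theorem simplex_add_aligned_simplex_split
    (n : ℕ) (hn : 0 < n) (α : Fin n → ℝ) (hα0 : ∀ i, 0 ≤ α i) (hαmono : Antitone α)
    (K : Set (EuclideanSpace ℝ (Fin n)))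
    (hK : K = convexHull ℝ
      (insert 0 (Set.range fun i => α i • EuclideanSpace.single i (1 : ℝ)))) :
    (coordSimplex (Fin n) + K =
      (({EuclideanSpace.single (⟨n - 1, by omega⟩ : Fin n) (1 : ℝ)} :
          Set (EuclideanSpace ℝ (Fin n))) + K) ∪
      (coordSimplex (Fin n) +
        coordProj (Finset.univ.erase (⟨n - 1, by omega⟩ : Fin n)) '' K)) ∧
    volume ((({EuclideanSpace.single (⟨n - 1, by omega⟩ : Fin n) (1 : ℝ)} :
          Set (EuclideanSpace ℝ (Fin n))) + K) ∩
      (coordSimplex (Fin n) +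
        coordProj (Finset.univ.erase (⟨n - 1, by omega⟩ : Fin n)) '' K)) = 0 := by
  subst hK
  have hlast : ∀ i, α ⟨n - 1, by omega⟩ ≤ α i :=
    fun i => hαmono (Fin.le_iff_val_le_val.2 (Nat.le_sub_one_of_lt i.isLt))
  exact ⟨coordSimplex_add_scaledCoordSimplex_eq_union hα0 hlast,
    volume_singleton_add_inter_coordSimplex_add_eq_zero hα0 _⟩
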